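/- For all integers l, p, q with 1 ≤ l ≤ q−1 and q < p, the identity (2l+3)(2l+2)·β(2l+3,p,q) + 4(p−l)(p−l−1)(q−l)(q−l+1)·β(2l−1,p,q) = (8l+7)(q−l)(p−l−1)·β(2l+1,p,q) holds. -/
import Mathlib

/-- `aSeq m = Σ_{b=0}^{⌊m/2⌋} C(m,2b)·(2b)!/b!`. -/
def aSeq (m : ℕ) : ℕ :=
  ∑ b ∈ Finset.range (m / 2 + 1), Nat.choose m (2 * b) * (Nat.factorial (2 * b) / Nat.factorial b)

/-- `beta k p q` : for `k = 2l` even it is `C(n-2l, p-l)·C(n, 2l)·aSeq(2l)` when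
`l ≤ min(p,q)` and `0` otherwise; for `k = 2l+1` odd it is
`C(n-2l-1, p-l-1)·C(n, 2l+1)·aSeq(2l+1)` when `l ≤ q` and `l+1 ≤ p`, and `0` otherwise.
Here `n = p + q`. -/
def beta (k p q : ℕ) : ℕ :=
  if k % 2 = 0 then
    if k / 2 ≤ p ∧ k / 2 ≤ q then
      Nat.choose (p + q - 2 * (k / 2)) (p - k / 2) * Nat.choose (p + q) (2 * (k / 2))
        * aSeq (2 * (k / 2))
    else 0
  else
    if k / 2 ≤ q ∧ k / 2 + 1 ≤ p then
      Nat.choose (p + q - (2 * (k / 2) + 1)) (p - (k / 2 + 1))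
        * Nat.choose (p + q) (2 * (k / 2) + 1) * aSeq (2 * (k / 2) + 1)
    else 0

/-- `(2b)!/b!` without division. -/
def tSeq (b : ℕ) : ℕ := (2 * b).descFactorial b

lemma tSeq_succ (b : ℕ) : tSeq (b + 1) = 2 * (2 * b + 1) * tSeq b := by
  have h1 : tSeq b * Nat.factorial b = Nat.factorial (2 * b) := by
    have h := Nat.factorial_mul_descFactorial (n := 2 * b) (k := b) (by omega)
    rw [show 2 * b - b = b by omega] at h
    rw [Nat.mul_comm]; exact h
  have h2 : tSeq (b + 1) * Nat.factorial (b + 1) = Nat.factorial (2 * (b + 1)) := by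
    have h := Nat.factorial_mul_descFactorial (n := 2 * (b + 1)) (k := b + 1) (by omega)
    rw [show 2 * (b + 1) - (b + 1) = b + 1 by omega] at h
    rw [Nat.mul_comm]; exact h
  have h3 : Nat.factorial (2 * (b + 1)) = (2 * b + 2) * ((2 * b + 1) * Nat.factorial (2 * b)) := by
    rw [show 2 * (b + 1) = (2 * b + 1) + 1 by ring, Nat.factorial_succ, Nat.factorial_succ]
  have key : tSeq (b + 1) * ((b + 1) * Nat.factorial b)
      = (2 * (2 * b + 1) * tSeq b) * ((b + 1) * Nat.factorial b) := by
    calc tSeq (b + 1) * ((b + 1) * Nat.factorial b)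
        = tSeq (b + 1) * Nat.factorial (b + 1) := by rw [Nat.factorial_succ]
      _ = (2 * b + 2) * ((2 * b + 1) * Nat.factorial (2 * b)) := by rw [h2, h3]
      _ = (2 * b + 2) * ((2 * b + 1) * (tSeq b * Nat.factorial b)) := by rw [h1]
      _ = (2 * (2 * b + 1) * tSeq b) * ((b + 1) * Nat.factorial b) := by ring
  exact Nat.eq_of_mul_eq_mul_right (by positivity) key

lemma aSeq_eq_sum (k N : ℕ) (h : k / 2 + 1 ≤ N) :
    aSeq k = ∑ b ∈ Finset.range N, Nat.choose k (2 * b) * tSeq b := by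
  unfold aSeq
  have hterm : ∀ b : ℕ, Nat.choose k (2 * b) * (Nat.factorial (2 * b) / Nat.factorial b)
      = Nat.choose k (2 * b) * tSeq b := by
    intro b
    have ht : tSeq b = Nat.factorial (2 * b) / Nat.factorial (2 * b - b) :=
      Nat.descFactorial_eq_div (by omega)
    rw [show 2 * b - b = b by omega] at ht
    rw [ht]
  simp only [hterm]
  apply Finset.sum_subset (Finset.range_subset_range.2 h)
  intro b _ hb
  have hb' : k / 2 + 1 ≤ b := by simpa using hb
  rw [Nat.choose_eq_zero_of_lt (by omega), Nat.zero_mul]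

lemma aSeq_rec (m : ℕ) : aSeq (m + 2) = aSeq (m + 1) + 2 * (m + 1) * aSeq m := by
  have e2 : aSeq (m + 2) = ∑ b ∈ Finset.range (m / 2 + 2),
      Nat.choose (m + 2) (2 * b) * tSeq b := aSeq_eq_sum _ _ (by omega)
  have e1 : aSeq (m + 1) = ∑ b ∈ Finset.range (m / 2 + 2),
      Nat.choose (m + 1) (2 * b) * tSeq b := aSeq_eq_sum _ _ (by omega)
  have e0 : aSeq m = ∑ b ∈ Finset.range (m / 2 + 1),
      Nat.choose m (2 * b) * tSeq b := aSeq_eq_sum _ _ le_rfl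
  rw [e0, e1, e2, Finset.mul_sum]
  rw [Finset.sum_range_succ' (fun b => Nat.choose (m + 2) (2 * b) * tSeq b) (m / 2 + 1),
      Finset.sum_range_succ' (fun b => Nat.choose (m + 1) (2 * b) * tSeq b) (m / 2 + 1)]
  have hterm : ∀ i ∈ Finset.range (m / 2 + 1),
      Nat.choose (m + 2) (2 * (i + 1)) * tSeq (i + 1)
        = Nat.choose (m + 1) (2 * (i + 1)) * tSeq (i + 1)
          + 2 * (m + 1) * (Nat.choose m (2 * i) * tSeq i) := by
    intro i _
    have hp : Nat.choose (m + 2) (2 * (i + 1))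
        = Nat.choose (m + 1) (2 * i + 1) + Nat.choose (m + 1) (2 * (i + 1)) := by
      rw [show 2 * (i + 1) = (2 * i + 1) + 1 by ring]
      exact Nat.choose_succ_succ (m + 1) (2 * i + 1)
    have hodd : Nat.choose (m + 1) (2 * i + 1) * tSeq (i + 1)
        = 2 * (m + 1) * (Nat.choose m (2 * i) * tSeq i) := by
      have h := Nat.add_one_mul_choose_eq m (2 * i)
      calc Nat.choose (m + 1) (2 * i + 1) * tSeq (i + 1)
          = (Nat.choose (m + 1) (2 * i + 1) * (2 * i + 1)) * (2 * tSeq i) := by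
            rw [tSeq_succ]; ring
        _ = ((m + 1) * Nat.choose m (2 * i)) * (2 * tSeq i) := by
            rw [show Nat.choose (m + 1) (2 * i + 1) * (2 * i + 1)
                = (m + 1) * Nat.choose m (2 * i) from h.symm]
        _ = 2 * (m + 1) * (Nat.choose m (2 * i) * tSeq i) := by ring
    rw [hp, Nat.add_mul, hodd]; ring
  rw [Finset.sum_congr rfl hterm, Finset.sum_add_distrib]
  simp [Nat.choose_zero_right]
  omega

/-- `C(a+2,b+1)·(b+1)·(a+1-b) = (a+2)·(a+1)·C(a,b)` -/
lemma chooseS1 (a b : ℕ) :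
    Nat.choose (a + 2) (b + 1) * ((b + 1) * (a + 1 - b))
      = (a + 2) * (a + 1) * Nat.choose a b := by
  have h1 : (a + 2) * Nat.choose (a + 1) b = Nat.choose (a + 2) (b + 1) * (b + 1) :=
    Nat.add_one_mul_choose_eq (a + 1) b
  have h2 : Nat.choose a b * (a + 1) = Nat.choose (a + 1) b * (a + 1 - b) :=
    Nat.choose_mul_succ_eq a b
  calc Nat.choose (a + 2) (b + 1) * ((b + 1) * (a + 1 - b))
      = (Nat.choose (a + 2) (b + 1) * (b + 1)) * (a + 1 - b) := by ring
    _ = ((a + 2) * Nat.choose (a + 1) b) * (a + 1 - b) := by rw [← h1]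
    _ = (a + 2) * (Nat.choose (a + 1) b * (a + 1 - b)) := by ring
    _ = (a + 2) * (Nat.choose a b * (a + 1)) := by rw [← h2]
    _ = (a + 2) * (a + 1) * Nat.choose a b := by ring

/-- `C(n,k+2)·(k+2)·(k+1) = C(n,k)·(n-k)·(n-k-1)` -/
lemma chooseS2 (n k : ℕ) :
    Nat.choose n (k + 2) * ((k + 2) * (k + 1))
      = Nat.choose n k * ((n - k) * (n - k - 1)) := by
  have h1 : Nat.choose n ((k + 1) + 1) * ((k + 1) + 1) = Nat.choose n (k + 1) * (n - (k + 1)) :=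
    Nat.choose_succ_right_eq n (k + 1)
  have h2 : Nat.choose n (k + 1) * (k + 1) = Nat.choose n k * (n - k) :=
    Nat.choose_succ_right_eq n k
  calc Nat.choose n (k + 2) * ((k + 2) * (k + 1))
      = (Nat.choose n ((k + 1) + 1) * ((k + 1) + 1)) * (k + 1) := by ring_nf
    _ = (Nat.choose n (k + 1) * (n - (k + 1))) * (k + 1) := by rw [h1]
    _ = (Nat.choose n (k + 1) * (k + 1)) * (n - (k + 1)) := by ring
    _ = (Nat.choose n k * (n - k)) * (n - (k + 1)) := by rw [h2]
    _ = Nat.choose n k * ((n - k) * (n - k - 1)) := by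
        rw [show n - (k + 1) = n - k - 1 by omega]; ring

theorem beta_odd_parity_recurrence (l p q : ℕ) (hl : 1 ≤ l) (hlq : l + 1 ≤ q) (hqp : q < p) :
    (2 * l + 3) * (2 * l + 2) * beta (2 * l + 3) p q
        + 4 * (p - l) * (p - l - 1) * (q - l) * (q - l + 1) * beta (2 * l - 1) p q
      = (8 * l + 7) * (q - l) * (p - l - 1) * beta (2 * l + 1) p q := by
  obtain ⟨j, hj⟩ : ∃ j, l = j + 1 := ⟨l - 1, by omega⟩
  subst hj
  obtain ⟨u, hu⟩ : ∃ u, q = (j + 1) + 1 + u := ⟨q - (j + 2), by omega⟩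
  obtain ⟨v, hv⟩ : ∃ v, p = q + 1 + v := ⟨p - (q + 1), by omega⟩
  -- unfold the three betas
  have hb3 : beta (2 * (j + 1) + 3) p q = Nat.choose (2 * u + v) (u + v)
      * Nat.choose (p + q) (2 * j + 5) * aSeq (2 * j + 5) := by
    unfold beta
    rw [if_neg (by omega), show (2 * (j + 1) + 3) / 2 = j + 2 by omega,
      if_pos (⟨by omega, by omega⟩ : j + 2 ≤ q ∧ j + 2 + 1 ≤ p),
      show p + q - (2 * (j + 2) + 1) = 2 * u + v by omega,
      show p - (j + 2 + 1) = u + v by omega,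
      show 2 * (j + 2) + 1 = 2 * j + 5 by omega]
  have hb1 : beta (2 * (j + 1) + 1) p q = Nat.choose (2 * u + v + 2) (u + v + 1)
      * Nat.choose (p + q) (2 * j + 3) * aSeq (2 * j + 3) := by
    unfold beta
    rw [if_neg (by omega), show (2 * (j + 1) + 1) / 2 = j + 1 by omega,
      if_pos (⟨by omega, by omega⟩ : j + 1 ≤ q ∧ j + 1 + 1 ≤ p),
      show p + q - (2 * (j + 1) + 1) = 2 * u + v + 2 by omega,
      show p - (j + 1 + 1) = u + v + 1 by omega,
      show 2 * (j + 1) + 1 = 2 * j + 3 by omega]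
  have hbm : beta (2 * (j + 1) - 1) p q = Nat.choose (2 * u + v + 4) (u + v + 2)
      * Nat.choose (p + q) (2 * j + 1) * aSeq (2 * j + 1) := by
    unfold beta
    rw [if_neg (by omega), show (2 * (j + 1) - 1) / 2 = j by omega,
      if_pos (⟨by omega, by omega⟩ : j ≤ q ∧ j + 1 ≤ p),
      show p + q - (2 * j + 1) = 2 * u + v + 4 by omega,
      show p - (j + 1) = u + v + 2 by omega]
  rw [hb3, hb1, hbm,
    show p - (j + 1) - 1 = u + v + 1 by omega,
    show p - (j + 1) = u + v + 2 by omega,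
    show q - (j + 1) = u + 1 by omega]
  -- choose identities
  have s1a := chooseS1 (2 * u + v) (u + v)
  rw [show 2 * u + v + 1 - (u + v) = u + 1 by omega] at s1a
  have s2a := chooseS2 (p + q) (2 * j + 3)
  rw [show 2 * j + 3 + 2 = 2 * j + 5 by omega, show 2 * j + 3 + 1 = 2 * j + 4 by omega,
    show p + q - (2 * j + 3) = 2 * u + v + 2 by omega,
    show 2 * u + v + 2 - 1 = 2 * u + v + 1 by omega] at s2a
  have hI : (2 * j + 5) * (2 * j + 4) * (Nat.choose (2 * u + v) (u + v)
        * Nat.choose (p + q) (2 * j + 5))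
      = (u + 1) * (u + v + 1) * (Nat.choose (2 * u + v + 2) (u + v + 1)
        * Nat.choose (p + q) (2 * j + 3)) := by
    calc (2 * j + 5) * (2 * j + 4) * (Nat.choose (2 * u + v) (u + v)
          * Nat.choose (p + q) (2 * j + 5))
        = Nat.choose (2 * u + v) (u + v)
            * (Nat.choose (p + q) (2 * j + 5) * ((2 * j + 5) * (2 * j + 4))) := by ring
      _ = Nat.choose (2 * u + v) (u + v)
            * (Nat.choose (p + q) (2 * j + 3) * ((2 * u + v + 2) * (2 * u + v + 1))) := by
          rw [s2a]
      _ = ((2 * u + v + 2) * (2 * u + v + 1) * Nat.choose (2 * u + v) (u + v))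
            * Nat.choose (p + q) (2 * j + 3) := by ring
      _ = (Nat.choose (2 * u + v + 2) (u + v + 1) * ((u + v + 1) * (u + 1)))
            * Nat.choose (p + q) (2 * j + 3) := by rw [s1a]
      _ = (u + 1) * (u + v + 1) * (Nat.choose (2 * u + v + 2) (u + v + 1)
            * Nat.choose (p + q) (2 * j + 3)) := by ring
  have s1b := chooseS1 (2 * u + v + 2) (u + v + 1)
  rw [show 2 * u + v + 2 + 2 = 2 * u + v + 4 by omega,
    show u + v + 1 + 1 = u + v + 2 by omega,
    show 2 * u + v + 2 + 1 - (u + v + 1) = u + 2 by omega,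
    show 2 * u + v + 2 + 1 = 2 * u + v + 3 by omega] at s1b
  have s2b := chooseS2 (p + q) (2 * j + 1)
  rw [show 2 * j + 1 + 2 = 2 * j + 3 by omega, show 2 * j + 1 + 1 = 2 * j + 2 by omega,
    show p + q - (2 * j + 1) = 2 * u + v + 4 by omega,
    show 2 * u + v + 4 - 1 = 2 * u + v + 3 by omega] at s2b
  have hII : (u + v + 2) * (u + 2) * (Nat.choose (2 * u + v + 4) (u + v + 2)
        * Nat.choose (p + q) (2 * j + 1))
      = (2 * j + 2) * (2 * j + 3) * (Nat.choose (2 * u + v + 2) (u + v + 1)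
        * Nat.choose (p + q) (2 * j + 3)) := by
    calc (u + v + 2) * (u + 2) * (Nat.choose (2 * u + v + 4) (u + v + 2)
          * Nat.choose (p + q) (2 * j + 1))
        = (Nat.choose (2 * u + v + 4) (u + v + 2) * ((u + v + 2) * (u + 2)))
            * Nat.choose (p + q) (2 * j + 1) := by ring
      _ = ((2 * u + v + 4) * (2 * u + v + 3) * Nat.choose (2 * u + v + 2) (u + v + 1))
            * Nat.choose (p + q) (2 * j + 1) := by rw [s1b]
      _ = Nat.choose (2 * u + v + 2) (u + v + 1)
            * (Nat.choose (p + q) (2 * j + 1) * ((2 * u + v + 4) * (2 * u + v + 3))) := by ring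
      _ = Nat.choose (2 * u + v + 2) (u + v + 1)
            * (Nat.choose (p + q) (2 * j + 3) * ((2 * j + 3) * (2 * j + 2))) := by rw [← s2b]
      _ = (2 * j + 2) * (2 * j + 3) * (Nat.choose (2 * u + v + 2) (u + v + 1)
            * Nat.choose (p + q) (2 * j + 3)) := by ring
  -- aSeq recurrence combination
  have r1 := aSeq_rec (2 * j + 1)
  rw [show 2 * j + 1 + 2 = 2 * j + 3 by omega, show 2 * j + 1 + 1 = 2 * j + 2 by omega] at r1
  have r2 := aSeq_rec (2 * j + 2)
  rw [show 2 * j + 2 + 2 = 2 * j + 4 by omega, show 2 * j + 2 + 1 = 2 * j + 3 by omega] at r2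
  have r3 := aSeq_rec (2 * j + 3)
  rw [show 2 * j + 3 + 2 = 2 * j + 5 by omega, show 2 * j + 3 + 1 = 2 * j + 4 by omega] at r3
  have hR : aSeq (2 * j + 5) + (8 * j + 8) * (2 * j + 3) * aSeq (2 * j + 1)
      = (8 * j + 15) * aSeq (2 * j + 3) := by
    rw [r3, r2, r1]; ring
  -- final combination
  calc (2 * (j + 1) + 3) * (2 * (j + 1) + 2) * (Nat.choose (2 * u + v) (u + v)
          * Nat.choose (p + q) (2 * j + 5) * aSeq (2 * j + 5))
        + 4 * (u + v + 2) * (u + v + 1) * (u + 1) * (u + 1 + 1)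
          * (Nat.choose (2 * u + v + 4) (u + v + 2) * Nat.choose (p + q) (2 * j + 1)
            * aSeq (2 * j + 1))
      = ((2 * j + 5) * (2 * j + 4) * (Nat.choose (2 * u + v) (u + v)
            * Nat.choose (p + q) (2 * j + 5))) * aSeq (2 * j + 5)
          + 4 * (u + v + 1) * (u + 1) * ((u + v + 2) * (u + 2)
            * (Nat.choose (2 * u + v + 4) (u + v + 2) * Nat.choose (p + q) (2 * j + 1)))
            * aSeq (2 * j + 1) := by ring
    _ = ((u + 1) * (u + v + 1) * (Nat.choose (2 * u + v + 2) (u + v + 1)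
            * Nat.choose (p + q) (2 * j + 3))) * aSeq (2 * j + 5)
          + 4 * (u + v + 1) * (u + 1) * ((2 * j + 2) * (2 * j + 3)
            * (Nat.choose (2 * u + v + 2) (u + v + 1) * Nat.choose (p + q) (2 * j + 3)))
            * aSeq (2 * j + 1) := by rw [hI, hII]
    _ = ((u + 1) * (u + v + 1) * (Nat.choose (2 * u + v + 2) (u + v + 1)
            * Nat.choose (p + q) (2 * j + 3)))
          * (aSeq (2 * j + 5) + (8 * j + 8) * (2 * j + 3) * aSeq (2 * j + 1)) := by ring
    _ = ((u + 1) * (u + v + 1) * (Nat.choose (2 * u + v + 2) (u + v + 1)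
            * Nat.choose (p + q) (2 * j + 3))) * ((8 * j + 15) * aSeq (2 * j + 3)) := by rw [hR]
    _ = (8 * (j + 1) + 7) * (u + 1) * (u + v + 1)
          * (Nat.choose (2 * u + v + 2) (u + v + 1) * Nat.choose (p + q) (2 * j + 3)
            * aSeq (2 * j + 3)) := by ring
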